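/- arXiv:1401.7419 — 7 statements merged into one kernel-verified Lean document; each statement's English description precedes it below -/
import Mathlib

section
/- Let φ and ψ be non-constant univariate real polynomials. Then the bivariate polynomial h(u,v) = φ(u) + ψ(v) is indecomposable over ℝ; that is, h cannot be written as r(h₀(u,v)) for a univariate real polynomial r of degree at least 2 and a bivariate real polynomial h₀. -/
/-!
Differentiating `φ(u) + ψ(v) = r(h₀(u, v))` in `v` gives `ψ'(v) = r'(h₀) · ∂ᵥh₀`. Specialise
`v := t` with `ψ'(t) ≠ 0` and put `k(u) := h₀(u, t)`: then `r'(k(u))` divides the nonzero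
constant `ψ'(t)`, so `r' ∘ k` is constant, while `φ(u) + ψ(t) = r(k(u))` forces `k` to be
non-constant. Hence `r'` is constant and `deg r ≤ 1`.
-/

open MvPolynomial

namespace Polynomial

theorem exists_eval_ne_zero {R : Type*} [CommRing R] [IsDomain R] [Infinite R] {p : R[X]}
    (hp : p ≠ 0) : ∃ t, p.eval t ≠ 0 := by
  by_contra! h
  exact hp (funext (by simpa using h))

theorem natDegree_le_one_of_isUnit_derivative_comp {R : Type*} [CommRing R] [IsDomain R]
    [IsAddTorsionFree R] {r k : R[X]} (hrk : 0 < (r.comp k).natDegree)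
    (hu : IsUnit (r.derivative.comp k)) : r.natDegree ≤ 1 := by
  rw [natDegree_comp] at hrk
  have hk : k.natDegree ≠ 0 := (Nat.pos_of_mul_pos_left hrk).ne'
  have hr' : r.derivative.natDegree = 0 := by
    have := natDegree_eq_zero_of_isUnit hu
    rw [natDegree_comp, mul_eq_zero] at this
    exact this.resolve_right hk
  rw [natDegree_derivative] at hr'
  omega

end Polynomial

theorem MvPolynomial.pderiv_aeval {R σ : Type*} [CommSemiring R] (i : σ) (p : MvPolynomial σ R)
    (f : Polynomial R) :
    pderiv i (Polynomial.aeval p f) = Polynomial.aeval p (Polynomial.derivative f) * pderiv i p :=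
  Derivation.map_aeval _ f p

/-- If `φ` and `ψ` are non-constant univariate real polynomials, then the bivariate polynomial
`h(u,v) = φ(u) + ψ(v)` is indecomposable over `ℝ`: it cannot be written as `r(h₀(u,v))` with
`r` a univariate real polynomial of degree at least 2 and `h₀` a bivariate real polynomial. -/
theorem add_form_indecomposable (φ ψ : Polynomial ℝ)
    (hφ : 0 < φ.natDegree) (hψ : 0 < ψ.natDegree) :
    ¬ ∃ (r : Polynomial ℝ) (h₀ : MvPolynomial (Fin 2) ℝ),
        2 ≤ r.natDegree ∧
        Polynomial.aeval (X 0 : MvPolynomial (Fin 2) ℝ) φ +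
          Polynomial.aeval (X 1 : MvPolynomial (Fin 2) ℝ) ψ = Polynomial.aeval h₀ r := by
  rintro ⟨r, h₀, hr, hEq⟩
  obtain ⟨t, ht⟩ := Polynomial.exists_eval_ne_zero (mt Polynomial.derivative_eq_zero.mp hψ.ne')
  have hchain : Polynomial.aeval (X 1 : MvPolynomial (Fin 2) ℝ) ψ.derivative =
      Polynomial.aeval h₀ r.derivative * pderiv 1 h₀ := by
    simpa [pderiv_aeval, pderiv_X] using congrArg (pderiv 1) hEq
  let ev : MvPolynomial (Fin 2) ℝ →ₐ[ℝ] Polynomial ℝ := aeval ![Polynomial.X, Polynomial.C t]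
  have hspec : φ + Polynomial.C (ψ.eval t) = r.comp (ev h₀) := by
    simpa [ev, ← Polynomial.aeval_algHom_apply, ← Polynomial.comp_eq_aeval, Polynomial.comp_C]
      using congrArg ev hEq
  have hconst :
      Polynomial.C (ψ.derivative.eval t) = r.derivative.comp (ev h₀) * ev (pderiv 1 h₀) := by
    simpa [ev, ← Polynomial.aeval_algHom_apply, ← Polynomial.comp_eq_aeval, Polynomial.comp_C]
      using congrArg ev hchain
  have hunit : IsUnit (r.derivative.comp (ev h₀)) :=
    isUnit_of_mul_isUnit_left (hconst ▸ Polynomial.isUnit_C.mpr ht.isUnit)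
  have := Polynomial.natDegree_le_one_of_isUnit_derivative_comp
    (by rwa [← hspec, Polynomial.natDegree_add_C]) hunit
  omega
end

section
/- Let h₀ be a bivariate real polynomial and r a univariate real polynomial such that r(h₀(u,v)) = φ(u)·ψ(v) identically, for some univariate real polynomials φ, ψ, with r non-constant. Then h₀ is of the form h₀(u,v) = φ₁(u)·ψ₁(v) + z for some univariate real polynomials φ₁, ψ₁ and a real constant z. -/
/-!
Over `ℂ`, a root `z` of `r` makes `H - z` (with `H` the image of `h₀`) a divisor of `φ(u) ψ(v)`.
In the UFD `ℂ[u][v]` such a divisor is a divisor of `φ(u)`, hence a polynomial in `u`, times a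
divisor of `ψ(v)`, hence a polynomial in `v`. So all `2 × 2` minors
`G(x,y) G(x',y') - G(x,y') G(x',y)` of `G = h₀ - z` vanish on `ℝ²`. Their real parts are the minors
of `h₀ - Re z`, and a real polynomial with vanishing minors and a nonzero value `G(a,b)` equals
`G(u,b) G(a,v) / G(a,b)`.
-/

open MvPolynomial

namespace Polynomial

theorem exists_eq_C_of_dvd_C {R : Type*} [CommRing R] [IsDomain R] {d : R[X]} {a : R}
    (ha : a ≠ 0) (h : d ∣ C a) : ∃ b, d = C b :=
  ⟨_, eq_C_of_natDegree_eq_zero <| Nat.eq_zero_of_le_zero <|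
    (natDegree_le_of_dvd h (C_ne_zero.mpr ha)).trans_eq (natDegree_C a)⟩

theorem exists_eq_algebraMap_of_aeval_eq_zero {K A : Type*} [Field K] [IsAlgClosed K]
    [CommRing A] [IsDomain A] [Algebra K A] {r : K[X]} (hr : r ≠ 0) {a : A}
    (h : aeval a r = 0) : ∃ w, a = algebraMap K A w := by
  rw [(IsAlgClosed.splits r).eq_prod_roots, map_mul, aeval_C, map_multiset_prod,
    Multiset.map_map, mul_eq_zero, Multiset.prod_eq_zero_iff, Multiset.mem_map] at h
  obtain h | ⟨w, -, hw⟩ := h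
  · simp_all
  · simp only [Function.comp_apply, map_sub, aeval_X, aeval_C] at hw
    exact ⟨w, sub_eq_zero.mp hw⟩

namespace Bivariate

theorem exists_eq_map_C_of_dvd_map_C {R : Type*} [CommRing R] [IsDomain R] {d : R[X][Y]}
    {f : R[X]} (hf : f ≠ 0) (h : d ∣ f.map C) : ∃ g : R[X], d = g.map C := by
  obtain ⟨g, hg⟩ := exists_eq_C_of_dvd_C hf (swap_map_C f ▸ _root_.map_dvd swap h)
  exact ⟨g, by rw [← swap_C, ← hg, swap_swap_apply]⟩

theorem exists_eq_C_mul_map_C_add_of_aeval_eq {K : Type*} [Field K] [IsAlgClosed K]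
    {H : K[X][Y]} {r φ ψ : K[X]} (hr : 0 < r.degree) (h : aeval H r = C φ * ψ.map C) :
    ∃ (p q : K[X]) (z : K), H = C p * q.map C + CC z := by
  by_cases h0 : aeval H r = 0
  · obtain ⟨w, hw⟩ := exists_eq_algebraMap_of_aeval_eq_zero (ne_zero_of_degree_gt hr) h0
    exact ⟨0, 0, w, by simpa using hw⟩
  obtain ⟨z, hz⟩ := IsAlgClosed.exists_root r hr.ne'
  have hdvd : H - CC z ∣ C φ * ψ.map C := by
    simpa [← h] using _root_.map_dvd (aeval H) (dvd_iff_isRoot.mpr hz)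
  obtain ⟨hφ, hψ⟩ := mul_ne_zero_iff.mp (h ▸ h0)
  obtain ⟨d₁, d₂, h₁, h₂, hd⟩ := exists_dvd_and_dvd_of_dvd_mul hdvd
  obtain ⟨p, rfl⟩ := exists_eq_C_of_dvd_C (C_ne_zero.mp hφ) h₁
  obtain ⟨q, rfl⟩ := exists_eq_map_C_of_dvd_map_C (fun hq => hψ (by simp [hq])) h₂
  exact ⟨p, q, z, by rw [← hd, sub_add_cancel]⟩

variable {R : Type*} [CommSemiring R]

theorem equivMvPolynomial_C (p : R[X]) :
    equivMvPolynomial R (C p) = aeval (MvPolynomial.X 0) p := by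
  induction p using Polynomial.induction_on <;>
    simp_all [equivMvPolynomial_C_C, equivMvPolynomial_C_X]

theorem equivMvPolynomial_map_C (p : R[X]) :
    equivMvPolynomial R (p.map C) = aeval (MvPolynomial.X 1) p := by
  induction p using Polynomial.induction_on <;>
    simp_all [equivMvPolynomial_C_C, equivMvPolynomial_X]

end Bivariate

end Polynomial

namespace MvPolynomial

section Eval

variable {R σ : Type*} [CommSemiring R]

theorem eval_polynomial_aeval_X (w : σ → R) (p : Polynomial R) (i : σ) :
    eval w (Polynomial.aeval (X i) p) = p.eval (w i) := by
  rw [← aeval_eq_eval, ← Polynomial.aeval_algHom_apply, aeval_X, Polynomial.coe_aeval_eq_eval]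

theorem eval_aeval_X_C (g : MvPolynomial (Fin 2) R) (b x : R) :
    (aeval ![Polynomial.X, Polynomial.C b] g).eval x = eval ![x, b] g := by
  rw [← Polynomial.coe_aeval_eq_eval, comp_aeval_apply, ← aeval_eq_eval]
  congr 2; ext i; fin_cases i <;> simp

theorem eval_aeval_C_X (g : MvPolynomial (Fin 2) R) (a y : R) :
    (aeval ![Polynomial.C a, Polynomial.X] g).eval y = eval ![a, y] g := by
  rw [← Polynomial.coe_aeval_eq_eval, comp_aeval_apply, ← aeval_eq_eval]
  congr 2; ext i; fin_cases i <;> simp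

theorem eval_comp_map {S : Type*} [CommSemiring S] (f : R →+* S) (v : σ → R)
    (p : MvPolynomial σ R) : eval (f ∘ v) (map f p) = f (eval v p) := by
  rw [eval_map]
  exact (eval₂_comp_left f (RingHom.id R) v p).symm

end Eval

open Polynomial.Bivariate in
theorem exists_eq_aeval_mul_aeval_add_C_of_aeval_eq {K : Type*} [Field K] [IsAlgClosed K]
    {H : MvPolynomial (Fin 2) K} {r φ ψ : Polynomial K} (hr : 0 < r.degree)
    (h : Polynomial.aeval H r = Polynomial.aeval (X 0) φ * Polynomial.aeval (X 1) ψ) :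
    ∃ (p q : Polynomial K) (z : K),
      H = Polynomial.aeval (X 0) p * Polynomial.aeval (X 1) q + C z := by
  set e := equivMvPolynomial K
  have h' : Polynomial.aeval (e.symm H) r = Polynomial.C φ * ψ.map Polynomial.C := by
    apply e.injective
    rw [← Polynomial.aeval_algHom_apply, e.apply_symm_apply, map_mul, equivMvPolynomial_C,
      equivMvPolynomial_map_C, h]
  obtain ⟨p, q, z, hpq⟩ := exists_eq_C_mul_map_C_add_of_aeval_eq hr h'
  refine ⟨p, q, z, ?_⟩
  rw [← e.apply_symm_apply H, hpq, map_add, map_mul, equivMvPolynomial_C, equivMvPolynomial_map_C,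
    Polynomial.CC, equivMvPolynomial_C_C]

end MvPolynomial

def RankLeOne {α β R : Type*} [Mul R] (G : α → β → R) : Prop :=
  ∀ x x' y y', G x y * G x' y' = G x y' * G x' y

theorem rankLeOne_mul {α β R : Type*} [CommSemigroup R] (f : α → R) (g : β → R) :
    RankLeOne fun x y => f x * g y :=
  fun x x' y y' => show f x * g y * (f x' * g y') = f x * g y' * (f x' * g y) by ac_rfl

/-- The minor of `G - z` differs from that of `G - Re z` only by `(Im z)²` terms, which cancel. -/
theorem RankLeOne.sub_re {α β : Type*} {G : α → β → ℝ} {z : ℂ}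
    (h : RankLeOne fun x y => (G x y : ℂ) - z) : RankLeOne fun x y => G x y - z.re := by
  intro x x' y y'
  have := congrArg Complex.re (h x x' y y')
  simp only [Complex.mul_re, Complex.sub_re, Complex.sub_im, Complex.ofReal_re,
    Complex.ofReal_im] at this
  linarith

theorem MvPolynomial.exists_eq_aeval_mul_aeval_of_rankLeOne {K : Type*} [Field K] [Infinite K]
    {g : MvPolynomial (Fin 2) K} (h : RankLeOne fun x y => eval ![x, y] g) :
    ∃ φ ψ : Polynomial K, g = Polynomial.aeval (X 0) φ * Polynomial.aeval (X 1) ψ := by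
  have eval_eq_pair (v : Fin 2 → K) : eval v g = eval ![v 0, v 1] g := by
    congr; ext i; fin_cases i <;> rfl
  by_cases hg : g = 0
  · exact ⟨0, 0, by simp [hg]⟩
  obtain ⟨v, hv⟩ : ∃ v, eval v g ≠ 0 := by
    by_contra! hv
    exact hg (funext (by simpa using hv))
  refine ⟨Polynomial.C (eval v g)⁻¹ * aeval ![Polynomial.X, Polynomial.C (v 1)] g,
    aeval ![Polynomial.C (v 0), Polynomial.X] g, funext fun w => ?_⟩
  have hminor : eval w g * eval v g = eval ![w 0, v 1] g * eval ![v 0, w 1] g := by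
    rw [eval_eq_pair w, eval_eq_pair v]
    exact h (w 0) (v 0) (w 1) (v 1)
  simp only [map_mul, eval_polynomial_aeval_X, Polynomial.eval_C, eval_aeval_X_C, eval_aeval_C_X]
  field_simp
  exact hminor

/-- If `r(h₀(u,v)) = φ(u)·ψ(v)` identically, with `r` a non-constant univariate real polynomial,
then `h₀(u,v) = φ₁(u)·ψ₁(v) + z` for some univariate real polynomials `φ₁, ψ₁` and `z ∈ ℝ`. -/
theorem decomposable_mul_form (h₀ : MvPolynomial (Fin 2) ℝ) (r φ ψ : Polynomial ℝ)
    (hr : 0 < r.natDegree)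
    (heq : Polynomial.aeval h₀ r =
      Polynomial.aeval (X 0 : MvPolynomial (Fin 2) ℝ) φ *
        Polynomial.aeval (X 1 : MvPolynomial (Fin 2) ℝ) ψ) :
    ∃ (φ₁ ψ₁ : Polynomial ℝ) (z : ℝ),
      h₀ = Polynomial.aeval (X 0 : MvPolynomial (Fin 2) ℝ) φ₁ *
          Polynomial.aeval (X 1 : MvPolynomial (Fin 2) ℝ) ψ₁ + C z := by
  set f := Complex.ofRealHom
  have hf : (algebraMap ℂ (MvPolynomial (Fin 2) ℂ)).comp f = (map f).comp (algebraMap ℝ _) :=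
    RingHom.ext fun a => (map_C f a).symm
  have hH : Polynomial.aeval (map f h₀) (r.map f) =
      Polynomial.aeval (X 0) (φ.map f) * Polynomial.aeval (X 1) (ψ.map f) := by
    rw [← Polynomial.map_aeval_eq_aeval_map hf, heq, map_mul, Polynomial.map_aeval_eq_aeval_map hf,
      Polynomial.map_aeval_eq_aeval_map hf, map_X, map_X]
  obtain ⟨p, q, z, hpq⟩ := exists_eq_aeval_mul_aeval_add_C_of_aeval_eq
    (by rwa [Polynomial.degree_map, ← Polynomial.natDegree_pos_iff_degree_pos]) hH
  have hprod : (fun x y => ((eval ![x, y] h₀ : ℝ) : ℂ) - z) =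
      fun (x y : ℝ) => p.eval ↑x * q.eval ↑y := by
    funext x y
    have := congrArg (eval (f ∘ ![x, y])) hpq
    rw [eval_comp_map, map_add, map_mul, eval_polynomial_aeval_X, eval_polynomial_aeval_X,
      eval_C] at this
    simp only [f, Function.comp_apply, Matrix.cons_val_zero, Matrix.cons_val_one,
      Matrix.cons_val_fin_one, Complex.ofRealHom_eq_coe] at this
    rw [this, add_sub_cancel_right]
  have hrank : RankLeOne fun x y => ((eval ![x, y] h₀ : ℝ) : ℂ) - z := hprod ▸ rankLeOne_mul _ _
  obtain ⟨φ₁, ψ₁, h⟩ := exists_eq_aeval_mul_aeval_of_rankLeOne (g := h₀ - C z.re)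
    (by simpa using hrank.sub_re)
  exact ⟨φ₁, ψ₁, z.re, by rw [← h, sub_add_cancel]⟩
end

section
/- Let f(x,y) = p₁(x) − q₁(y) and g(x,y) = p₂(x) − q₂(y) be bivariate real polynomials with deg p₁ = deg q₁ = d₁ ≥ 1 and deg p₂ = deg q₂ = d₂ ≥ 1, with leading coefficients a₁, b₁ of p₁, q₁ and a₂, b₂ of p₂, q₂ respectively. If f and g have a nontrivial common factor in ℝ[x,y], then (a₁/b₁)^{d₂} = (a₂/b₂)^{d₁}. -/
/-! Taking the leading form `u*` (the top homogeneous component) is multiplicative, so a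
nonconstant common factor `w` of `f` and `g` yields a nonconstant homogeneous `w*` dividing both
`f* = a₁x^d₁ - b₁y^d₁` and `g* = a₂x^d₂ - b₂y^d₂`. Over `ℂ` a nonconstant binary form has a
zero `(s, u) ≠ 0`; there `a₁s^d₁ = b₁u^d₁` and `a₂s^d₂ = b₂u^d₂`, which forces `s ≠ 0`, and
both sides of the claim equal `(u/s)^(d₁d₂)`. -/

namespace MvPolynomial

variable {σ : Type*}

section CommSemiring

variable {R : Type*} [CommSemiring R]

noncomputable def leadingForm (u : MvPolynomial σ R) : MvPolynomial σ R :=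
  homogeneousComponent u.totalDegree u

lemma isHomogeneous_leadingForm (u : MvPolynomial σ R) :
    u.leadingForm.IsHomogeneous u.totalDegree :=
  homogeneousComponent_isHomogeneous _ _

theorem homogeneousComponent_totalDegree_add_mul (u v : MvPolynomial σ R) :
    homogeneousComponent (u.totalDegree + v.totalDegree) (u * v) =
      u.leadingForm * v.leadingForm := by
  classical
  ext m
  by_cases hm : m.degree = u.totalDegree + v.totalDegree
  · rw [coeff_homogeneousComponent, if_pos hm, coeff_mul, coeff_mul]
    refine Finset.sum_congr rfl fun ab hab => ?_
    have hdeg : ab.1.degree + ab.2.degree = u.totalDegree + v.totalDegree := by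
      rw [← hm, ← map_add, Finset.HasAntidiagonal.mem_antidiagonal.mp hab]
    simp only [leadingForm, coeff_homogeneousComponent]
    by_cases h₁ : ab.1.degree = u.totalDegree
    · rw [if_pos h₁, if_pos (by omega)]
    · rw [if_neg h₁, zero_mul]
      rcases lt_or_gt_of_ne h₁ with h | h
      · rw [coeff_eq_zero_of_totalDegree_lt (f := v) (d := ab.2)
          (by change _ < ab.2.degree; omega), mul_zero]
      · rw [coeff_eq_zero_of_totalDegree_lt (f := u) (d := ab.1) h, zero_mul]
  · rw [coeff_homogeneousComponent, if_neg hm,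
      ((isHomogeneous_leadingForm u).mul (isHomogeneous_leadingForm v)).coeff_eq_zero hm]

lemma homogeneousComponent_aeval_X (n : ℕ) (i : σ) (p : Polynomial R) :
    homogeneousComponent n (Polynomial.aeval (X i) p) = C (p.coeff n) * X i ^ n := by
  induction p using Polynomial.induction_on' with
  | add p q hp hq => simp only [map_add, hp, hq, Polynomial.coeff_add, add_mul]
  | monomial k c =>
    rw [Polynomial.aeval_monomial, algebraMap_eq, homogeneousComponent_C_mul,
      homogeneousComponent_of_mem (isHomogeneous_X_pow i k), Polynomial.coeff_monomial]
    split_ifs <;> simp_all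

lemma totalDegree_aeval_X_le (i : σ) (p : Polynomial R) :
    (Polynomial.aeval (X i : MvPolynomial σ R) p).totalDegree ≤ p.natDegree := by
  rw [Polynomial.aeval_eq_sum_range]
  refine totalDegree_finsetSum_le fun k hk =>
    (totalDegree_smul_le (p.coeff k) (X i ^ k : MvPolynomial σ R)).trans ?_
  rw [X_pow_eq_monomial]
  refine (totalDegree_monomial_le _ _).trans ?_
  simpa [Finsupp.sum_single_index] using Finset.mem_range_succ_iff.mp hk

lemma leadingForm_dvd_homogeneousComponent [IsDomain R] {w f : MvPolynomial σ R} {n : ℕ}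
    (h : w ∣ f) (hn : f.totalDegree ≤ n) : w.leadingForm ∣ homogeneousComponent n f := by
  obtain ⟨v, rfl⟩ := h
  rcases eq_or_ne w 0 with rfl | hw
  · simp
  rcases eq_or_ne v 0 with rfl | hv
  · simp
  rw [totalDegree_mul_of_isDomain hw hv] at hn
  rcases hn.eq_or_lt with hn | hn
  · rw [← hn, homogeneousComponent_totalDegree_add_mul]
    exact dvd_mul_right _ _
  · rw [homogeneousComponent_eq_zero _ _ ((totalDegree_mul w v).trans_lt hn)]
    exact dvd_zero _

end CommSemiring

lemma map_coeff_mul_pow_eq_of_dvd_aeval_X_sub_aeval_X {R S : Type*} [CommRing R] [IsDomain R]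
    [CommRing S] (φ : R →+* S) {w : MvPolynomial σ R} {p q : Polynomial R} {i j : σ} {d : ℕ}
    (hp : p.natDegree ≤ d) (hq : q.natDegree ≤ d)
    (hw : w ∣ Polynomial.aeval (X i) p - Polynomial.aeval (X j) q)
    {x : σ → S} (hx : eval x (map φ w.leadingForm) = 0) :
    φ (p.coeff d) * x i ^ d = φ (q.coeff d) * x j ^ d := by
  have hdeg : (Polynomial.aeval (X i : MvPolynomial σ R) p -
      Polynomial.aeval (X j : MvPolynomial σ R) q).totalDegree ≤ d :=
    (totalDegree_sub _ _).trans <|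
      max_le ((totalDegree_aeval_X_le i p).trans hp) ((totalDegree_aeval_X_le j q).trans hq)
  obtain ⟨v, hv⟩ := leadingForm_dvd_homogeneousComponent hw hdeg
  have := congrArg (fun F => eval x (map φ F)) hv
  simp only [map_sub, homogeneousComponent_aeval_X, map_mul, map_pow, map_C, map_X, eval_C,
    eval_X, hx, zero_mul] at this
  exact sub_eq_zero.mp this

lemma totalDegree_pos_of_not_isUnit {K : Type*} [Field K] {w : MvPolynomial σ K} (hw : w ≠ 0)
    (hu : ¬IsUnit w) : 0 < w.totalDegree := by
  refine Nat.pos_of_ne_zero fun h₀ => hu ?_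
  refine isUnit_iff_totalDegree_of_isReduced.mpr ⟨isUnit_iff_ne_zero.mpr fun hc => hw ?_, h₀⟩
  rw [totalDegree_eq_zero_iff_eq_C.mp h₀, hc, C_0]

/- `W` is the homogenization of `P = W(X, 1)`: a root `t` of `P` gives the zero `(t, 1)`,
and if `P` is a constant `c` then `W = C c * X 1 ^ k` vanishes at `(1, 0)`. -/
lemma IsHomogeneous.exists_ne_zero_eval_eq_zero {K : Type*} [Field K] [IsAlgClosed K]
    {W : MvPolynomial (Fin 2) K} {k : ℕ} (hW : W.IsHomogeneous k) (hk : k ≠ 0) :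
    ∃ x : Fin 2 → K, x ≠ 0 ∧ eval x W = 0 := by
  set P : Polynomial K := MvPolynomial.aeval ![Polynomial.X, 1] W with hP
  by_cases hdeg : P.degree ≤ 0
  · refine ⟨![1, 0], by simp, ?_⟩
    rw [← Polynomial.homogenize_eq_of_isHomogeneous hW hP.symm,
      Polynomial.eq_C_of_degree_le_zero hdeg, Polynomial.homogenize_C]
    simp [hk]
  · obtain ⟨t, ht⟩ := IsAlgClosed.exists_root P (ne_of_gt (not_le.mp hdeg))
    refine ⟨![t, 1], by simp, ?_⟩
    have hC : (Polynomial.evalRingHom t).comp (algebraMap K (Polynomial K)) = RingHom.id K :=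
      RingHom.ext fun _ => Polynomial.eval_C
    have hx : (fun i => (![Polynomial.X, 1] i).eval t) = ![t, 1] := by
      ext i; fin_cases i <;> simp
    rw [← ht.eq_zero, hP, aeval_def, polynomial_eval_eval₂, hC, hx]
    rfl

end MvPolynomial

lemma div_pow_eq_div_pow_of_mul_pow_eq {K : Type*} [Field K] {a₁ b₁ a₂ b₂ : K} {d₁ d₂ : ℕ}
    {x : Fin 2 → K} (hx : x ≠ 0) (hb₁ : b₁ ≠ 0) (hb₂ : b₂ ≠ 0) (hd₁ : d₁ ≠ 0)
    (h₁ : a₁ * x 0 ^ d₁ = b₁ * x 1 ^ d₁) (h₂ : a₂ * x 0 ^ d₂ = b₂ * x 1 ^ d₂) :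
    (a₁ / b₁) ^ d₂ = (a₂ / b₂) ^ d₁ := by
  have hx₀ : x 0 ≠ 0 := by
    intro h₀
    rw [h₀, zero_pow hd₁, mul_zero, zero_eq_mul] at h₁
    have h₁' : x 1 = 0 := (pow_eq_zero_iff hd₁).mp (h₁.resolve_left hb₁)
    exact hx (funext fun i => by fin_cases i <;> assumption)
  have e₁ : a₁ / b₁ = (x 1 / x 0) ^ d₁ := by
    rw [div_pow, div_eq_div_iff hb₁ (pow_ne_zero _ hx₀), h₁, mul_comm]
  have e₂ : a₂ / b₂ = (x 1 / x 0) ^ d₂ := by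
    rw [div_pow, div_eq_div_iff hb₂ (pow_ne_zero _ hx₀), h₂, mul_comm]
  rw [e₁, e₂, ← pow_mul, ← pow_mul, mul_comm]

open MvPolynomial

/-- If `f(x,y) = p₁(x) − q₁(y)` and `g(x,y) = p₂(x) − q₂(y)`, with `deg p₁ = deg q₁ = d₁ ≥ 1`
and `deg p₂ = deg q₂ = d₂ ≥ 1`, have a nontrivial common factor in `ℝ[x,y]`, then, for the
leading coefficients `a₁, b₁, a₂, b₂` of `p₁, q₁, p₂, q₂`, we have
`(a₁/b₁)^{d₂} = (a₂/b₂)^{d₁}`. -/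
theorem common_factor_leading_coeffs (p₁ q₁ p₂ q₂ : Polynomial ℝ) (d₁ d₂ : ℕ)
    (hd₁ : 1 ≤ d₁) (hd₂ : 1 ≤ d₂)
    (hp₁ : p₁.natDegree = d₁) (hq₁ : q₁.natDegree = d₁)
    (hp₂ : p₂.natDegree = d₂) (hq₂ : q₂.natDegree = d₂)
    (hcf : ∃ w : MvPolynomial (Fin 2) ℝ, w ≠ 0 ∧ ¬ IsUnit w ∧
      w ∣ (Polynomial.aeval (X 0 : MvPolynomial (Fin 2) ℝ) p₁ -
            Polynomial.aeval (X 1 : MvPolynomial (Fin 2) ℝ) q₁) ∧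
      w ∣ (Polynomial.aeval (X 0 : MvPolynomial (Fin 2) ℝ) p₂ -
            Polynomial.aeval (X 1 : MvPolynomial (Fin 2) ℝ) q₂)) :
    (p₁.leadingCoeff / q₁.leadingCoeff) ^ d₂ = (p₂.leadingCoeff / q₂.leadingCoeff) ^ d₁ := by
  obtain ⟨w, hw₀, hwu, hw₁, hw₂⟩ := hcf
  obtain ⟨x, hx, hwx⟩ := ((isHomogeneous_leadingForm w).map Complex.ofRealHom)
    |>.exists_ne_zero_eval_eq_zero (totalDegree_pos_of_not_isUnit hw₀ hwu).ne'
  have h₁ := map_coeff_mul_pow_eq_of_dvd_aeval_X_sub_aeval_X _ hp₁.le hq₁.le hw₁ hwx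
  have h₂ := map_coeff_mul_pow_eq_of_dvd_aeval_X_sub_aeval_X _ hp₂.le hq₂.le hw₂ hwx
  have coeff_eq_leadingCoeff {p : Polynomial ℝ} {d : ℕ} (hp : p.natDegree = d) :
      p.coeff d = p.leadingCoeff := hp ▸ Polynomial.coeff_natDegree
  simp only [Complex.ofRealHom_eq_coe, coeff_eq_leadingCoeff hp₁, coeff_eq_leadingCoeff hq₁,
    coeff_eq_leadingCoeff hp₂, coeff_eq_leadingCoeff hq₂] at h₁ h₂
  have leadingCoeff_ne_zero {q : Polynomial ℝ} {d : ℕ} (hd : 1 ≤ d) (hq : q.natDegree = d) :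
      (q.leadingCoeff : ℂ) ≠ 0 := by
    exact_mod_cast Polynomial.leadingCoeff_ne_zero.mpr
      (Polynomial.ne_zero_of_natDegree_gt (hq ▸ hd))
  exact_mod_cast div_pow_eq_div_pow_of_mul_pow_eq hx (leadingCoeff_ne_zero hd₁ hq₁)
    (leadingCoeff_ne_zero hd₂ hq₂) (by omega) h₁ h₂
end

section
/- Let f, g be bivariate real polynomials of degrees d_f and d_g respectively. If f and g vanish simultaneously at more than d_f·d_g points of ℝ², then f and g have a common non-constant factor in ℝ[x,y]. -/
/-!
Let `f, g` be coprime of total degrees `m, n`, let `P` be a finite set of common zeros, `c = #P`,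
and let `T k = (k + 2).choose 2` be the dimension of the polynomials of degree `≤ k`. By
coprimality, `f u + g v = 0` forces `(u, v) = (g w, -f w)`, so the polynomials `f u + g v` with
`deg u ≤ c + n`, `deg v ≤ c + m` span a space of dimension at least
`T (c + n) + T (c + m) - T c = T (c + m + n) - m n` inside the polynomials of degree `≤ c + m + n`.
All of them vanish on `P`, which by Lagrange interpolation imposes `c` independent linear
conditions in that degree. Hence `c ≤ m n`.
-/

open MvPolynomial Module Finset

theorem Nat.choose_two_add_add_add_two (a b c : ℕ) :
    (c + a + b + 2).choose 2 + (c + 2).choose 2 =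
      (c + b + 2).choose 2 + (c + a + 2).choose 2 + a * b := by
  qify
  simp only [Nat.cast_choose_two]
  push_cast
  ring

namespace LinearMap

variable {K Z U W F : Type*} [Field K] [AddCommGroup Z] [Module K Z] [AddCommGroup U] [Module K U]
  [AddCommGroup W] [Module K W] [AddCommGroup F] [Module K F]
  [FiniteDimensional K Z] [FiniteDimensional K U] [FiniteDimensional K W]

theorem finrank_add_finrank_le_of_ker_le_range (Ψ : Z →ₗ[K] U) (Φ : U →ₗ[K] W) (E : W →ₗ[K] F)
    (hΦ : ker Φ ≤ range Ψ) (hE : range Φ ≤ ker E) (hsurj : Function.Surjective E) :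
    finrank K U + finrank K F ≤ finrank K Z + finrank K W := by
  have hU := Φ.finrank_range_add_finrank_ker
  have hW := E.finrank_range_add_finrank_ker
  rw [range_eq_top.2 hsurj, finrank_top] at hW
  have hker := (Submodule.finrank_mono hΦ).trans Ψ.finrank_range_le
  have hrange := Submodule.finrank_mono hE
  omega

end LinearMap

theorem exists_eq_mul_of_mul_add_mul_eq_zero {R : Type*} [CommRing R] [NoZeroDivisors R]
    [DecompositionMonoid R] {f g u v : R} (hfg : IsRelPrime f g) (hg : g ≠ 0)
    (h : f * u + g * v = 0) : ∃ w, u = g * w ∧ v = -(f * w) := by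
  obtain ⟨w, rfl⟩ : g ∣ u := hfg.symm.dvd_of_dvd_mul_left ⟨-v, by linear_combination h⟩
  refine ⟨w, rfl, ?_⟩
  have : g * (v + f * w) = 0 := by linear_combination h
  exact eq_neg_of_add_eq_zero_left ((mul_eq_zero.1 this).resolve_left hg)

namespace MvPolynomial

variable {σ K : Type*} [Field K]

theorem finrank_restrictTotalDegree [Fintype σ] (k : ℕ) :
    finrank K (restrictTotalDegree σ K k) = (k + Fintype.card σ).choose (Fintype.card σ) := by
  classical
  have hset : {d : σ →₀ ℕ | (d.sum fun _ e => e) ≤ k} =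
      ↑((range (k + 1)).biUnion fun i => finsuppAntidiag (univ : Finset σ) i) := by
    ext d
    simp [Finsupp.sum_fintype]
  rw [restrictTotalDegree, finrank_eq_nat_card_basis (basisRestrictSupport K _), hset,
    Nat.card_coe_set_eq, Set.ncard_coe_finset, card_biUnion]
  · simp only [card_finsuppAntidiag_nat_eq_choose, card_univ]
    cases Fintype.card σ with
    | zero => simp [sum_range_succ']
    | succ t =>
      rw [← Nat.add_assoc, ← Nat.sum_range_add_choose]
      refine sum_congr rfl fun i _ => ?_
      rw [Nat.add_right_comm, Nat.add_sub_cancel, Nat.add_comm, Nat.choose_symm_add]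
  · intro i _ j _ hij
    exact disjoint_left.2 fun d hi hj =>
      hij ((mem_finsuppAntidiag.1 hi).1.symm.trans (mem_finsuppAntidiag.1 hj).1)

theorem exists_vanishing_on_of_notMem {x : σ → K} {P : Finset (σ → K)} (hx : x ∉ P) :
    ∃ q : MvPolynomial σ K, q.totalDegree ≤ #P ∧ eval x q ≠ 0 ∧ ∀ y ∈ P, eval y q = 0 := by
  classical
  induction P using Finset.induction_on with
  | empty => exact ⟨1, by simp, by simp, by simp⟩
  | insert y P hy ih =>
    obtain ⟨q, hdeg, hx', hP⟩ := ih fun h => hx (mem_insert_of_mem h)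
    obtain ⟨i, hi⟩ := Function.ne_iff.1 fun h : x = y => hx (h ▸ mem_insert_self y P)
    refine ⟨q * (X i - C (y i)), ?_, ?_, ?_⟩
    · calc (q * (X i - C (y i))).totalDegree
          ≤ q.totalDegree + (X i - C (y i)).totalDegree := totalDegree_mul _ _
        _ ≤ #P + 1 := add_le_add hdeg ((totalDegree_sub_C_le _ _).trans (totalDegree_X i).le)
        _ = #(insert y P) := (card_insert_of_notMem hy).symm
    · simpa [sub_eq_zero] using ⟨hx', hi⟩
    · simp only [mem_insert, forall_eq_or_imp, map_mul, map_sub, eval_X, eval_C, sub_self,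
        mul_zero, true_and]
      exact fun z hz => by rw [hP z hz, zero_mul]

theorem exists_totalDegree_le_eval_eq (P : Finset (σ → K)) (u : (σ → K) → K) :
    ∃ p : MvPolynomial σ K, p.totalDegree ≤ #P - 1 ∧ ∀ x ∈ P, eval x p = u x := by
  classical
  choose q hdeg hne hzero using fun x => exists_vanishing_on_of_notMem (notMem_erase x P)
  refine ⟨∑ x ∈ P, (u x / eval x (q x)) • q x, ?_, fun x hx => ?_⟩
  · refine (totalDegree_finsetSum _ _).trans (Finset.sup_le fun x hx => ?_)
    calc ((u x / eval x (q x)) • q x).totalDegree ≤ (q x).totalDegree := totalDegree_smul_le _ _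
      _ ≤ #P - 1 := (hdeg x).trans (card_erase_of_mem hx).le
  · rw [map_sum, sum_eq_single x (fun y _ hyx => ?_) (absurd hx)]
    · simp [div_mul_cancel₀ _ (hne x)]
    · simp [hzero y x (mem_erase.2 ⟨Ne.symm hyx, hx⟩)]


noncomputable def evalOn (P : Finset (σ → K)) : MvPolynomial σ K →ₗ[K] P → K :=
  LinearMap.pi fun x => (aeval (x : σ → K)).toLinearMap

@[simp]
theorem evalOn_apply (P : Finset (σ → K)) (p : MvPolynomial σ K) (x : P) :
    evalOn P p x = eval (x : σ → K) p := by
  simp [evalOn]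

theorem evalOn_comp_subtype_surjective {P : Finset (σ → K)} {N : ℕ} (hN : #P ≤ N + 1) :
    Function.Surjective (evalOn P ∘ₗ (restrictTotalDegree σ K N).subtype) := by
  classical
  intro u
  obtain ⟨p, hdeg, hp⟩ :=
    exists_totalDegree_le_eval_eq P fun x => if hx : x ∈ P then u ⟨x, hx⟩ else 0
  refine ⟨⟨p, (mem_restrictTotalDegree _ _ _).2 (by omega)⟩, ?_⟩
  ext x
  simp [hp x x.2]

noncomputable def mulLeftRestrictTotalDegree (f : MvPolynomial σ K) {a b : ℕ}
    (h : f.totalDegree + a ≤ b) : restrictTotalDegree σ K a →ₗ[K] restrictTotalDegree σ K b :=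
  (LinearMap.mulLeft K f ∘ₗ (restrictTotalDegree σ K a).subtype).codRestrict _ fun u =>
    (mem_restrictTotalDegree _ _ _).2 <| (totalDegree_mul _ _).trans <|
      (Nat.add_le_add_left ((mem_restrictTotalDegree _ _ _).1 u.2) _).trans h

section Koszul

variable (f g : MvPolynomial σ K) (c : ℕ)

noncomputable def koszulSyzygyMap :
    restrictTotalDegree σ K c →ₗ[K]
      restrictTotalDegree σ K (c + g.totalDegree) × restrictTotalDegree σ K (c + f.totalDegree) :=
  (mulLeftRestrictTotalDegree g (by omega)).prod (-mulLeftRestrictTotalDegree f (by omega))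

noncomputable def linearCombinationMap :
    restrictTotalDegree σ K (c + g.totalDegree) × restrictTotalDegree σ K (c + f.totalDegree) →ₗ[K]
      restrictTotalDegree σ K (c + f.totalDegree + g.totalDegree) :=
  (mulLeftRestrictTotalDegree f (by omega)).coprod (mulLeftRestrictTotalDegree g (by omega))

@[simp]
theorem coe_linearCombinationMap_apply
    (uv : restrictTotalDegree σ K (c + g.totalDegree) ×
      restrictTotalDegree σ K (c + f.totalDegree)) :
    (linearCombinationMap f g c uv : MvPolynomial σ K) = f * uv.1 + g * uv.2 :=
  rfl

variable {f g}

theorem ker_linearCombinationMap_le_range_koszulSyzygyMap (hfg : IsRelPrime f g) (hg : g ≠ 0) :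
    LinearMap.ker (linearCombinationMap f g c) ≤ LinearMap.range (koszulSyzygyMap f g c) := by
  rintro ⟨u, v⟩ huv
  have h : f * (u : MvPolynomial σ K) + g * v = 0 := congrArg Subtype.val huv
  obtain ⟨w, hu, hv⟩ := exists_eq_mul_of_mul_add_mul_eq_zero hfg hg h
  have hw : w.totalDegree ≤ c := by
    rcases eq_or_ne w 0 with rfl | hw
    · simp
    have hdeg := (mem_restrictTotalDegree _ _ _).1 u.2
    rw [hu, totalDegree_mul_of_isDomain hg hw] at hdeg
    omega
  exact ⟨⟨w, (mem_restrictTotalDegree _ _ _).2 hw⟩,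
    Prod.ext (Subtype.ext hu.symm) (Subtype.ext hv.symm)⟩

end Koszul

theorem card_le_totalDegree_mul_of_isRelPrime {f g : MvPolynomial (Fin 2) K} (hfg : IsRelPrime f g)
    {P : Finset (Fin 2 → K)} (hP : ∀ x ∈ P, eval x f = 0 ∧ eval x g = 0) :
    #P ≤ f.totalDegree * g.totalDegree := by
  rcases eq_or_ne g 0 with rfl | hg
  · have hf : IsUnit f := isRelPrime_zero_right.1 hfg
    simp [eq_empty_of_forall_notMem fun x hx => (hf.map (eval x)).ne_zero (hP x hx).1]
  have hvanish : LinearMap.range (linearCombinationMap f g #P) ≤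
      LinearMap.ker (evalOn P ∘ₗ
        (restrictTotalDegree (Fin 2) K (#P + f.totalDegree + g.totalDegree)).subtype) := by
    rintro _ ⟨uv, rfl⟩
    ext x
    simp [(hP x x.2).1, (hP x x.2).2]
  have hdim := LinearMap.finrank_add_finrank_le_of_ker_le_range _ _ _
    (ker_linearCombinationMap_le_range_koszulSyzygyMap #P hfg hg) hvanish
    (evalOn_comp_subtype_surjective (by omega))
  simp only [finrank_prod, finrank_restrictTotalDegree, Fintype.card_fin,
    finrank_fintype_fun_eq_card, Fintype.card_coe] at hdim
  have := Nat.choose_two_add_add_add_two f.totalDegree g.totalDegree #P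
  omega

theorem isRelPrime_of_forall_dvd_totalDegree_eq_zero [Nonempty σ] {f g : MvPolynomial σ K}
    (h : ∀ w, w ∣ f → w ∣ g → w.totalDegree = 0) : IsRelPrime f g := by
  intro w hwf hwg
  rcases eq_or_ne w 0 with rfl | hw
  · obtain ⟨i⟩ := ‹Nonempty σ›
    have := h (X i) (zero_dvd_iff.1 hwf ▸ dvd_zero _) (zero_dvd_iff.1 hwg ▸ dvd_zero _)
    simp at this
  · have hdeg := h w hwf hwg
    rw [totalDegree_eq_zero_iff_eq_C] at hdeg
    rw [hdeg] at hw ⊢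
    exact (Ne.isUnit fun h0 => hw (by rw [h0, C_0])).map C

end MvPolynomial

/-- Bivariate Bézout theorem over `ℝ`: if `f` and `g` vanish simultaneously at more than
`deg f · deg g` points of `ℝ²`, then they have a common non-constant factor. -/
theorem bezout_bivariate (f g : MvPolynomial (Fin 2) ℝ)
    (S : Finset (ℝ × ℝ))
    (hS : f.totalDegree * g.totalDegree < S.card)
    (hzero : ∀ p ∈ S, eval ![p.1, p.2] f = 0 ∧ eval ![p.1, p.2] g = 0) :
    ∃ w : MvPolynomial (Fin 2) ℝ, 0 < w.totalDegree ∧ w ∣ f ∧ w ∣ g := by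
  contrapose! hS
  have hfg : IsRelPrime f g := isRelPrime_of_forall_dvd_totalDegree_eq_zero fun w hwf hwg =>
    Nat.eq_zero_of_not_pos fun hw => hS w hw hwf hwg
  simpa using card_le_totalDegree_mul_of_isRelPrime hfg
    (P := S.map (finTwoArrowEquiv ℝ).symm.toEmbedding) fun _ hx => by
      obtain ⟨p, hp, rfl⟩ := mem_map.1 hx
      exact hzero p hp
end

section
/- Let x₁,…,x_d be univariate real polynomials, not all constant, with xᵢ(0) = 0 for each i, and suppose that Σᵢ (xᵢ(t) − xᵢ(s))² = h(φ(t)·ψ(s)) identically in t, s, for some univariate real polynomials h, φ, ψ. Then h(φ(t)ψ(s)) is a constant independent of t and s. -/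
/-!
On the diagonal `t = s` the left-hand side vanishes, so `h ∘ (φ ψ) = 0`. Hence either `h = 0`, or
`φ ψ` is a constant polynomial; comparing degrees, a product of polynomials over a domain is
constant only if one factor is zero or both are constant, and then `φ(t) ψ(s)` does not depend
on `t` and `s` either.
-/

open Polynomial

namespace Polynomial

variable {R : Type*} [Semiring R] [NoZeroDivisors R]

theorem eval_mul_eval_of_mul_eq_C {φ ψ : R[X]} {a : R} (hφψ : φ * ψ = C a) (t s : R) :
    φ.eval t * ψ.eval s = a := by
  by_cases hφ : φ = 0
  · simpa [hφ] using congrArg (coeff · 0) hφψ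
  by_cases hψ : ψ = 0
  · simpa [hψ] using congrArg (coeff · 0) hφψ
  have hdeg : φ.natDegree + ψ.natDegree = 0 := by
    rw [← natDegree_mul hφ hψ, hφψ, natDegree_C]
  have hφC := eq_C_of_natDegree_eq_zero (Nat.eq_zero_of_add_eq_zero_right hdeg)
  have hψC := eq_C_of_natDegree_eq_zero (Nat.eq_zero_of_add_eq_zero_left hdeg)
  rw [hφC, hψC, ← C_mul] at hφψ
  rw [hφC, hψC, eval_C, eval_C]
  exact C_injective hφψ

theorem exists_forall_eval_mul_eval_eq_of_comp_mul_eq_zero {h φ ψ : R[X]}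
    (hcomp : h.comp (φ * ψ) = 0) : ∃ c, ∀ t s, h.eval (φ.eval t * ψ.eval s) = c := by
  rcases comp_eq_zero_iff.mp hcomp with hh | ⟨-, hφψ⟩
  · exact ⟨0, fun t s => by simp [hh]⟩
  · exact ⟨h.eval _, fun t s => by rw [eval_mul_eval_of_mul_eq_C hφψ]⟩

end Polynomial

theorem mul_form_dist_const_general (d : ℕ) (x : Fin d → Polynomial ℝ)
    (h φ ψ : Polynomial ℝ)
    (heq : ∀ t s : ℝ, ∑ i, ((x i).eval t - (x i).eval s) ^ 2 =
      h.eval (φ.eval t * ψ.eval s)) :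
    ∃ c : ℝ, ∀ t s : ℝ, h.eval (φ.eval t * ψ.eval s) = c := by
  have hcomp : h.comp (φ * ψ) = 0 := Polynomial.funext fun t => by simp [← heq t t]
  exact exists_forall_eval_mul_eval_eq_of_comp_mul_eq_zero hcomp

/-- If `x₁,…,x_d` are univariate real polynomials, not all constant, with `xᵢ(0) = 0`, and
`Σᵢ (xᵢ(t) − xᵢ(s))² = h(φ(t)·ψ(s))` identically, then `h(φ(t)ψ(s))` is a constant. -/
theorem mul_form_dist_const (d : ℕ) (x : Fin d → Polynomial ℝ)
    (hx0 : ∀ i, (x i).eval 0 = 0)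
    (hnc : ∃ i, 0 < (x i).natDegree)
    (h φ ψ : Polynomial ℝ)
    (heq : ∀ t s : ℝ, ∑ i, ((x i).eval t - (x i).eval s) ^ 2 =
      h.eval (φ.eval t * ψ.eval s)) :
    ∃ c : ℝ, ∀ t s : ℝ, h.eval (φ.eval t * ψ.eval s) = c :=
  mul_form_dist_const_general d x h φ ψ heq
end

section
/- Let x₁,…,x_d be univariate real polynomials with xᵢ(0) = 0 for each i, and let φ be a univariate real polynomial with φ(0) = 0, such that Σᵢ₌₁^d (xᵢ(t) − xᵢ(s))² = (φ(t) − φ(s))² identically in t, s. Then the vectors (x₁(t),…,x_d(t)) and (x₁(s),…,x_d(s)) are parallel for all t, s ∈ ℝ; equivalently, the curve γ(t) = (x₁(t),…,x_d(t)) is contained in a line through the origin. -/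
/-!
Polarization turns the three distance identities `‖γ t‖ = |φ t|`, `‖γ s‖ = |φ s|`,
`‖γ t - γ s‖ = |φ t - φ s|` into `⟪γ t, γ s⟫ = φ t φ s`, so Cauchy–Schwarz holds with equality:
expanding gives `‖φ s • γ t - φ t • γ s‖² = 0`.
-/

section InnerProductSpace

variable {E : Type*} [NormedAddCommGroup E] [InnerProductSpace ℝ E] {u v : E} {a b : ℝ}

theorem real_inner_eq_mul_of_norm_sq (hu : ‖u‖ ^ 2 = a ^ 2) (hv : ‖v‖ ^ 2 = b ^ 2)
    (huv : ‖u - v‖ ^ 2 = (a - b) ^ 2) : inner ℝ u v = a * b := by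
  rw [norm_sub_sq_real, hu, hv] at huv
  linarith

theorem smul_sub_smul_eq_zero_of_norm_sq (hu : ‖u‖ ^ 2 = a ^ 2) (hv : ‖v‖ ^ 2 = b ^ 2)
    (huv : ‖u - v‖ ^ 2 = (a - b) ^ 2) : b • u - a • v = 0 := by
  have hinner := real_inner_eq_mul_of_norm_sq hu hv huv
  have hsq : ‖b • u - a • v‖ ^ 2 = 0 := by
    rw [norm_sub_sq_real, norm_smul, norm_smul, mul_pow, mul_pow, hu, hv,
      real_inner_smul_left, real_inner_smul_right, hinner, Real.norm_eq_abs, Real.norm_eq_abs,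
      sq_abs, sq_abs]
    ring
  simpa using hsq

theorem exists_smul_add_smul_eq_zero_of_norm_sq (hu : ‖u‖ ^ 2 = a ^ 2) (hv : ‖v‖ ^ 2 = b ^ 2)
    (huv : ‖u - v‖ ^ 2 = (a - b) ^ 2) :
    ∃ α β : ℝ, (α, β) ≠ (0, 0) ∧ α • u + β • v = 0 := by
  by_cases ha : a = 0
  · refine ⟨1, 0, by simp, ?_⟩
    simpa [ha] using hu
  · refine ⟨b, -a, by simp [ha], ?_⟩
    simpa [sub_eq_add_neg] using smul_sub_smul_eq_zero_of_norm_sq hu hv huv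

end InnerProductSpace

/-- If `xᵢ(0) = 0`, `φ(0) = 0`, and `Σᵢ (xᵢ(t) − xᵢ(s))² = (φ(t) − φ(s))²` identically, then
for all `t, s` the vectors `(x₁(t),…,x_d(t))` and `(x₁(s),…,x_d(s))` are parallel (linearly
dependent), i.e. the curve `γ(t) = (x₁(t),…,x_d(t))` lies on a line through the origin. -/
theorem sq_dist_eq_sq_diff_imp_line (d : ℕ) (x : Fin d → Polynomial ℝ)
    (φ : Polynomial ℝ)
    (hx0 : ∀ i, (x i).eval 0 = 0) (hφ0 : φ.eval 0 = 0)
    (heq : ∀ t s : ℝ, ∑ i, ((x i).eval t - (x i).eval s) ^ 2 =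
      (φ.eval t - φ.eval s) ^ 2) :
    ∀ t s : ℝ, ∃ a b : ℝ, (a, b) ≠ (0, 0) ∧
      ∀ i, a * (x i).eval t + b * (x i).eval s = 0 := by
  intro t s
  let γ : ℝ → EuclideanSpace ℝ (Fin d) := fun r => WithLp.toLp 2 fun i => (x i).eval r
  have hdist : ∀ r r', ‖γ r - γ r'‖ ^ 2 = (φ.eval r - φ.eval r') ^ 2 := fun r r' => by
    simpa [γ, EuclideanSpace.real_norm_sq_eq] using heq r r'
  have hγ0 : γ 0 = 0 := by
    ext i
    simp [γ, hx0]
  have hnorm : ∀ r, ‖γ r‖ ^ 2 = φ.eval r ^ 2 := fun r => by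
    simpa [hγ0, hφ0] using hdist r 0
  obtain ⟨a, b, hab, hcomb⟩ :=
    exists_smul_add_smul_eq_zero_of_norm_sq (hnorm t) (hnorm s) (hdist t s)
  exact ⟨a, b, hab, fun i => by simpa [γ] using congrArg (· i) hcomb⟩
end

section
/- Let x₁,…,x_d and φ, ψ, h be univariate real polynomials such that Σᵢ₌₁^d (xᵢ(t) − xᵢ(s))² = h(φ(t) + ψ(s)) identically in t, s, where the left-hand side is not identically zero. Then there is a real root x₀ of h with φ(t) + ψ(t) ≡ x₀, i.e., ψ(t) = x₀ − φ(t) for all t, and x₀ is a root of h of multiplicity at least 2. -/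
/-!
On the diagonal `t = s` the left side vanishes, so `h ∘ (φ + ψ) = 0` with `h ≠ 0`, which forces
`φ + ψ ≡ x₀` with `h(x₀) = 0`. Differentiating in `t` at `t = s`, the left side, a sum of squares
vanishing there, has zero derivative, so `h'(x₀) φ'(s) = 0` for all `s`. If `h'(x₀) ≠ 0`, then `φ`
is constant, hence `φ(t) + ψ(s) = φ(s) + ψ(s) = x₀` and the left side vanishes identically.
-/

open Polynomial

lemma Polynomial.isRoot_derivative_sum_sq_sub_C_eval {R ι : Type*} [CommRing R] (s : Finset ι)
    (x : ι → R[X]) (a : R) : (derivative (∑ i ∈ s, (x i - C ((x i).eval a)) ^ 2)).IsRoot a := by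
  simp [derivative_pow, eval_finsetSum]

section

variable {R ι : Type*} [CommRing R] [IsDomain R] [Infinite R] {h φ ψ : R[X]}

lemma exists_isRoot_forall_eval_add_eq (hh : h ≠ 0)
    (hdiag : ∀ t, h.eval (φ.eval t + ψ.eval t) = 0) :
    ∃ x₀, h.IsRoot x₀ ∧ ∀ t, φ.eval t + ψ.eval t = x₀ := by
  have hcomp : h.comp (φ + ψ) = 0 := Polynomial.funext fun t => by simpa using hdiag t
  obtain ⟨hroot, hconst⟩ := (comp_eq_zero_iff.mp hcomp).resolve_left hh
  exact ⟨_, hroot, fun t => by simpa using congr_arg (eval t) hconst⟩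

lemma eval_derivative_mul_eval_derivative_eq_zero_of_sum_sq_eq {s : Finset ι} {x : ι → R[X]}
    (heq : ∀ t a, ∑ i ∈ s, ((x i).eval t - (x i).eval a) ^ 2 = h.eval (φ.eval t + ψ.eval a))
    (a : R) : (derivative h).eval (φ.eval a + ψ.eval a) * (derivative φ).eval a = 0 := by
  have hpoly : ∑ i ∈ s, (x i - C ((x i).eval a)) ^ 2 = h.comp (φ + C (ψ.eval a)) :=
    Polynomial.funext fun t => by simp [eval_finsetSum, heq]
  simpa [hpoly, derivative_comp, mul_comm] using isRoot_derivative_sum_sq_sub_C_eval s x a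

end

/-- If `Σᵢ (xᵢ(t) − xᵢ(s))² = h(φ(t) + ψ(s))` identically, with the left side not identically
zero, then there is a real root `x₀` of `h` with `φ(t) + ψ(t) ≡ x₀`, and `x₀` is a root of `h`
of multiplicity at least 2. -/
theorem add_form_root_multiplicity (d : ℕ) (x : Fin d → Polynomial ℝ)
    (h φ ψ : Polynomial ℝ)
    (heq : ∀ t s : ℝ, ∑ i, ((x i).eval t - (x i).eval s) ^ 2 =
      h.eval (φ.eval t + ψ.eval s))
    (hnz : ∃ t s : ℝ, ∑ i, ((x i).eval t - (x i).eval s) ^ 2 ≠ 0) :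
    ∃ x₀ : ℝ, h.IsRoot x₀ ∧ (∀ t : ℝ, φ.eval t + ψ.eval t = x₀) ∧
      2 ≤ h.rootMultiplicity x₀ := by
  obtain ⟨t, s, hts⟩ := hnz
  have hh : h ≠ 0 := by
    rintro rfl
    exact hts (by simpa using heq t s)
  obtain ⟨x₀, hroot, hsum⟩ :=
    exists_isRoot_forall_eval_add_eq hh fun t => by simpa using (heq t t).symm
  refine ⟨x₀, hroot, hsum, (one_lt_rootMultiplicity_iff_isRoot hh).2 ⟨hroot, ?_⟩⟩
  by_contra hd
  have hφ : derivative φ = 0 := Polynomial.funext fun a => by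
    have hcrit := eval_derivative_mul_eval_derivative_eq_zero_of_sum_sq_eq heq a
    rw [hsum] at hcrit
    simpa using (mul_eq_zero.mp hcrit).resolve_left hd
  have hφts : φ.eval t = φ.eval s := by
    rw [eq_C_of_derivative_eq_zero hφ]; simp
  exact hts (by rw [heq, hφts, hsum, hroot.eq_zero])
end
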